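/- Let R be a prime Noetherian ring with Krull dimension n and let X be a set of primes p with Kdim(R/p) = m ≤ n, V = ∩_{p∈X} C(p), k = {right ideals I | I ∩ V ≠ ∅}, g = {right ideals I | Kdim(R/I) < m}. If k = g, then k is a Gabriel filter, and hence V is a right Ore set. -/

import Mathlib

open MulOpposite
universe u

/-- Gabriel–Rentschler deviation: `DevLE α P` means the deviation of the
poset `P` is at most `α`. -/
def DevLE : Ordinal.{u} → (P : Type u) → [inst : PartialOrder P] → Prop :=
  fun α P _ =>
    ∀ f : ℕ → P, (∀ n, f (n + 1) ≤ f n) →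
      ∃ N : ℕ, ∀ n, N ≤ n →
        f (n + 1) = f n ∨ ∃ β, ∃ _ : β < α, DevLE β (Set.Icc (f (n + 1)) (f n))
termination_by α => α

/-- Right ideals of `R`, as submodules of `R` viewed as a right module. -/
abbrev RightIdeal (R : Type u) [Ring R] : Type u := Submodule Rᵐᵒᵖ R

/-- Gabriel–Rentschler Krull dimension of a right `R`-module `M`
(least `α` bounding the deviation of the submodule lattice; junk value `0`
if no such ordinal exists). -/
noncomputable def rKdim (R : Type u) [Ring R] (M : Type u) [AddCommGroup M]
    [Module Rᵐᵒᵖ M] : Ordinal.{u} :=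
  sInf {α : Ordinal.{u} | DevLE α (Submodule Rᵐᵒᵖ M)}

/-- `x⁻¹(I) = {a | x * a ∈ I}`, a right ideal. -/
def preIdeal {R : Type u} [Ring R] (x : R) (I : RightIdeal R) : RightIdeal R where
  carrier := {a : R | x * a ∈ I}
  add_mem' := by intro a b ha hb; simpa [mul_add] using add_mem ha hb
  zero_mem' := by simp
  smul_mem' := by
    intro r a ha
    show x * (op (unop r) • a) ∈ I
    rw [op_smul_eq_mul, ← mul_assoc]
    exact I.smul_mem r ha

/-- `S` is a right Ore set. -/
def RightOre {R : Type u} [Ring R] (S : Set R) : Prop :=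
  ∀ r : R, ∀ s ∈ S, ∃ r' : R, ∃ s' ∈ S, r * s' = s * r'

/-- A multiplicatively closed set. -/
def MulClosed {R : Type u} [Ring R] (S : Set R) : Prop :=
  ∀ a ∈ S, ∀ b ∈ S, a * b ∈ S

/-- A Gabriel filter of right ideals. -/
def IsGabrielFilter {R : Type u} [Ring R] (F : Set (RightIdeal R)) : Prop :=
  (∀ I ∈ F, ∀ J : RightIdeal R, I ≤ J → J ∈ F) ∧
  (∀ I ∈ F, ∀ J ∈ F, I ⊓ J ∈ F) ∧
  (∀ I ∈ F, ∀ x : R, preIdeal x I ∈ F)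

/-- A right ideal that is two-sided. -/
def TwoSided {R : Type u} [Ring R] (I : RightIdeal R) : Prop :=
  ∀ r : R, ∀ x ∈ I, r * x ∈ I

/-- A (two-sided) prime ideal of a possibly noncommutative ring. -/
def IsPrimeIdeal {R : Type u} [Ring R] (p : RightIdeal R) : Prop :=
  TwoSided p ∧ p ≠ ⊤ ∧ ∀ a b : R, (∀ r : R, a * r * b ∈ p) → a ∈ p ∨ b ∈ p

/-- `C(p)`: the elements of `R` regular modulo `p`. -/
def CMod {R : Type u} [Ring R] (p : RightIdeal R) : Set R :=
  {c : R | (∀ a : R, c * a ∈ p → a ∈ p) ∧ (∀ a : R, a * c ∈ p → a ∈ p)}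

/-- A prime ring. -/
def IsPrimeRing (R : Type u) [Ring R] : Prop :=
  ∀ a b : R, (∀ r : R, a * r * b = 0) → a = 0 ∨ b = 0

/-- A right module is `V`-torsion. -/
def IsTorsionBy' {R : Type u} [Ring R] (V : Set R) (M : Type u) [AddCommGroup M]
    [Module Rᵐᵒᵖ M] : Prop :=
  ∀ x : M, ∃ v ∈ V, op v • x = 0

/-- The annihilator (as a set) of a right module. -/
def annSet (R : Type u) [Ring R] (M : Type u) [AddCommGroup M] [Module Rᵐᵒᵖ M] :
    Set R :=
  {a : R | ∀ x : M, op a • x = 0}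

/-- `R` is right fully bounded: in every prime factor, every essential right
ideal contains a nonzero two-sided ideal. -/
def RightFullyBounded (R : Type u) [Ring R] : Prop :=
  ∀ p : RightIdeal R, IsPrimeIdeal p →
    ∀ I : RightIdeal R, p ≤ I →
      (∀ J : RightIdeal R, p < J → p < I ⊓ J) →
      ∃ A : RightIdeal R, TwoSided A ∧ p < A ∧ A ≤ I

/-- A uniform right module: any two nonzero submodules intersect nontrivially. -/
def IsUniformMod (R : Type u) [Ring R] (M : Type u) [AddCommGroup M]
    [Module Rᵐᵒᵖ M] : Prop :=
  ∀ N N' : Submodule Rᵐᵒᵖ M, N ≠ ⊥ → N' ≠ ⊥ → N ⊓ N' ≠ ⊥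

/-- The annihilator (as a set of elements of `R`) of a submodule. -/
def annSubSet (R : Type u) [Ring R] {M : Type u} [AddCommGroup M]
    [Module Rᵐᵒᵖ M] (N : Submodule Rᵐᵒᵖ M) : Set R :=
  {a : R | ∀ x ∈ N, op a • x = 0}

/-- `q` is an associated (assassinator) prime of the right module `M`:
`q` is prime and is the annihilator of a nonzero submodule all of whose
nonzero submodules also have annihilator `q`. -/
def IsAssocPrime (R : Type u) [Ring R] (q : RightIdeal R) (M : Type u)
    [AddCommGroup M] [Module Rᵐᵒᵖ M] : Prop :=
  IsPrimeIdeal q ∧ ∃ N : Submodule Rᵐᵒᵖ M, N ≠ ⊥ ∧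
    ∀ N' : Submodule Rᵐᵒᵖ M, N' ≤ N → N' ≠ ⊥ → annSubSet R N' = (q : Set R)

/-- A critical right module: nonzero, and every proper quotient has strictly
smaller Krull dimension. -/
def IsCriticalMod (R : Type u) [Ring R] (M : Type u) [AddCommGroup M]
    [Module Rᵐᵒᵖ M] : Prop :=
  Nontrivial M ∧
    ∀ N : Submodule Rᵐᵒᵖ M, N ≠ ⊥ → rKdim R (M ⧸ N) < rKdim R M

/-- `M` is a fully faithful right `R/q`-module: `q` annihilates `M` and every
nonzero submodule of `M` has annihilator exactly `q`. -/
def FullyFaithfulOver (R : Type u) [Ring R] (q : RightIdeal R) (M : Type u)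
    [AddCommGroup M] [Module Rᵐᵒᵖ M] : Prop :=
  (q : Set R) ⊆ annSet R M ∧
    ∀ N : Submodule Rᵐᵒᵖ M, N ≠ ⊥ → annSubSet R N = (q : Set R)

/-! The Krull dimension of `R/I` is the deviation of the interval `[I, R]` of right ideals.
Enlarging `I` shrinks this interval, and `R/x⁻¹(I)` embeds in `R/I`; in the modular lattice of
right ideals the deviation of `[I ∩ J, R]` is at most the larger of those of
`[I ∩ J, J] ≅ [I, I + J]` and `[J, R]`. Hence `g` is a Gabriel filter (empty when `m = 0`), and
so is `k = g`. The Ore condition follows from the filter property of `k`: for `s ∈ V` the ideal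
`r⁻¹(sR)` lies in `k`, so it contains some `s' ∈ V`, i.e. `r s' ∈ sR`. -/

open Set

section Deviation

variable {P Q : Type u} [PartialOrder P] [PartialOrder Q]

theorem devLE_of_subsingleton [Subsingleton P] (α : Ordinal.{u}) : DevLE α P := by
  rw [DevLE]
  exact fun f _ => ⟨0, fun _ _ => Or.inl (Subsingleton.elim _ _)⟩

theorem devLE_Icc_self (x : P) (α : Ordinal.{u}) : DevLE α (Icc x x) :=
  have : Subsingleton (Icc x x) :=
    ⟨fun u v => Subtype.ext ((le_antisymm u.2.2 u.2.1).trans (le_antisymm v.2.1 v.2.2))⟩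
  devLE_of_subsingleton α

theorem DevLE.mono {α β : Ordinal.{u}} (h : DevLE α P) (hαβ : α ≤ β) : DevLE β P := by
  rw [DevLE] at h ⊢
  intro f hf
  obtain ⟨N, hN⟩ := h f hf
  refine ⟨N, fun n hn => (hN n hn).imp_right ?_⟩
  rintro ⟨γ, hγ, hd⟩
  exact ⟨γ, hγ.trans_le hαβ, hd⟩

def OrderEmbedding.restrictIcc (e : Q ↪o P) (x y : Q) : Icc x y ↪o Icc (e x) (e y) :=
  OrderEmbedding.ofMapLEIff (fun z => ⟨e z, e.monotone z.2.1, e.monotone z.2.2⟩)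
    (fun _ _ => e.le_iff_le)

theorem DevLE.of_orderEmbedding {α : Ordinal.{u}} (e : Q ↪o P) (h : DevLE α P) :
    DevLE α Q := by
  induction α using WellFoundedLT.induction generalizing P Q with
  | _ α IH =>
    rw [DevLE] at h ⊢
    intro f hf
    obtain ⟨N, hN⟩ := h (e ∘ f) (fun n => e.monotone (hf n))
    refine ⟨N, fun n hn => (hN n hn).imp (fun heq => e.injective heq) ?_⟩
    rintro ⟨β, hβ, hd⟩
    exact ⟨β, hβ, IH β hβ (e.restrictIcc _ _) hd⟩

theorem devLE_congr {α : Ordinal.{u}} (e : P ≃o Q) : DevLE α P ↔ DevLE α Q :=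
  ⟨DevLE.of_orderEmbedding e.symm.toOrderEmbedding, DevLE.of_orderEmbedding e.toOrderEmbedding⟩

def Set.OrdConnected.iccOrderIso {s : Set P} [s.OrdConnected] (x y : s) :
    Icc x y ≃o Icc (x : P) y where
  toFun z := ⟨z.1, z.2⟩
  invFun z := ⟨⟨z.1, ‹s.OrdConnected›.out x.2 y.2 z.2⟩, z.2⟩
  left_inv _ := rfl
  right_inv _ := rfl
  map_rel_iff' := Iff.rfl

theorem devLE_Icc_iff {α : Ordinal.{u}} {a b : P} :
    DevLE α (Icc a b) ↔ ∀ f : ℕ → P, (∀ n, f (n + 1) ≤ f n) → (∀ n, f n ∈ Icc a b) →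
      ∃ N : ℕ, ∀ n, N ≤ n →
        f (n + 1) = f n ∨ ∃ β, ∃ _ : β < α, DevLE β (Icc (f (n + 1)) (f n)) := by
  rw [DevLE]
  constructor
  · intro h f hf hab
    obtain ⟨N, hN⟩ := h (fun n => ⟨f n, hab n⟩) hf
    refine ⟨N, fun n hn => (hN n hn).imp (congrArg Subtype.val) ?_⟩
    rintro ⟨β, hβ, hd⟩
    exact ⟨β, hβ, (devLE_congr (OrdConnected.iccOrderIso _ _)).mp hd⟩
  · intro h f hf
    obtain ⟨N, hN⟩ := h (fun n => f n) hf (fun n => (f n).2)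
    refine ⟨N, fun n hn => (hN n hn).imp Subtype.ext ?_⟩
    rintro ⟨β, hβ, hd⟩
    exact ⟨β, hβ, (devLE_congr (OrdConnected.iccOrderIso _ _)).mpr hd⟩

theorem DevLE.Icc_subset {α : Ordinal.{u}} {a b a' b' : P} (h : DevLE α (Icc a' b'))
    (ha : a' ≤ a) (hb : b ≤ b') : DevLE α (Icc a b) := by
  rw [devLE_Icc_iff] at h ⊢
  exact fun f hf hab => h f hf (fun n => Icc_subset_Icc ha hb (hab n))

theorem exists_devLE_of_step {α : Ordinal.{u}} {x₁ y₁ x₂ y₂ : P}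
    (h₁ : x₁ = y₁ ∨ ∃ β, ∃ _ : β < α, DevLE β (Icc x₁ y₁))
    (h₂ : x₂ = y₂ ∨ ∃ β, ∃ _ : β < α, DevLE β (Icc x₂ y₂)) :
    x₁ = y₁ ∧ x₂ = y₂ ∨ ∃ β, ∃ _ : β < α, DevLE β (Icc x₁ y₁) ∧ DevLE β (Icc x₂ y₂) := by
  rcases h₁ with rfl | ⟨β₁, hβ₁, hd₁⟩ <;> rcases h₂ with rfl | ⟨β₂, hβ₂, hd₂⟩
  · exact Or.inl ⟨rfl, rfl⟩
  · exact Or.inr ⟨β₂, hβ₂, devLE_Icc_self _ _, hd₂⟩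
  · exact Or.inr ⟨β₁, hβ₁, hd₁, devLE_Icc_self _ _⟩
  · exact Or.inr ⟨max β₁ β₂, max_lt hβ₁ hβ₂, hd₁.mono (le_max_left _ _),
      hd₂.mono (le_max_right _ _)⟩

end Deviation

section ModularLattice

variable {L : Type u} [Lattice L] [IsModularLattice L]

theorem DevLE.of_inf_sup {α : Ordinal.{u}} {a b c : L}
    (hinf : DevLE α (Icc (a ⊓ c) (b ⊓ c))) (hsup : DevLE α (Icc (a ⊔ c) (b ⊔ c))) :
    DevLE α (Icc a b) := by
  induction α using WellFoundedLT.induction generalizing a b with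
  | _ α IH =>
    rw [devLE_Icc_iff] at hinf hsup ⊢
    intro f hf hab
    obtain ⟨N₁, hN₁⟩ := hinf (fun n => f n ⊓ c) (fun n => inf_le_inf_right c (hf n))
      (fun n => ⟨inf_le_inf_right c (hab n).1, inf_le_inf_right c (hab n).2⟩)
    obtain ⟨N₂, hN₂⟩ := hsup (fun n => f n ⊔ c) (fun n => sup_le_sup_right (hf n) c)
      (fun n => ⟨sup_le_sup_right (hab n).1 c, sup_le_sup_right (hab n).2 c⟩)
    refine ⟨max N₁ N₂, fun n hn => ?_⟩
    rcases exists_devLE_of_step (hN₁ n (le_of_max_le_left hn)) (hN₂ n (le_of_max_le_right hn))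
      with ⟨hinf_eq, hsup_eq⟩ | ⟨β, hβ, hd₁, hd₂⟩
    · exact Or.inl (eq_of_le_of_inf_le_of_sup_le (hf n) hinf_eq.ge hsup_eq.ge)
    · exact Or.inr ⟨β, hβ, IH β hβ hd₁ hd₂⟩

theorem DevLE.Icc_inf_top [OrderTop L] {α β : Ordinal.{u}} {a b : L}
    (ha : DevLE α (Icc a ⊤)) (hb : DevLE β (Icc b ⊤)) :
    DevLE (max α β) (Icc (a ⊓ b) ⊤) := by
  refine DevLE.of_inf_sup (c := b) ?_ ?_
  · rw [inf_assoc, inf_idem, top_inf_eq,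
      devLE_congr (infIccOrderIsoIccSup' a b)]
    exact (ha.Icc_subset le_rfl le_top).mono (le_max_left _ _)
  · rw [sup_eq_right.mpr (inf_le_right : a ⊓ b ≤ b), top_sup_eq]
    exact hb.mono (le_max_right _ _)

end ModularLattice

section KrullDimension

variable {R : Type u} [Ring R] {M N : Type u} [AddCommGroup M] [Module Rᵐᵒᵖ M]
  [AddCommGroup N] [Module Rᵐᵒᵖ N]

theorem rKdim_le_of_devLE {α : Ordinal.{u}} (h : DevLE α (Submodule Rᵐᵒᵖ M)) :
    rKdim R M ≤ α :=
  csInf_le' h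

theorem devLE_rKdim {α : Ordinal.{u}} (h : DevLE α (Submodule Rᵐᵒᵖ M)) :
    DevLE (rKdim R M) (Submodule Rᵐᵒᵖ M) :=
  csInf_mem (s := {α | DevLE α (Submodule Rᵐᵒᵖ M)}) ⟨α, h⟩

theorem devLE_rKdim_of_ne_zero (h : rKdim R M ≠ 0) : DevLE (rKdim R M) (Submodule Rᵐᵒᵖ M) := by
  obtain ⟨α, hα⟩ : {α : Ordinal.{u} | DevLE α (Submodule Rᵐᵒᵖ M)}.Nonempty := by
    by_contra hempty
    exact h (by rw [rKdim, Set.not_nonempty_iff_eq_empty.mp hempty, Ordinal.sInf_empty])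
  exact devLE_rKdim hα

theorem devLE_quotient_iff {α : Ordinal.{u}} (K : Submodule Rᵐᵒᵖ M) :
    DevLE α (Submodule Rᵐᵒᵖ (M ⧸ K)) ↔ DevLE α (Icc K ⊤) :=
  devLE_congr ((Submodule.comapMkQRelIso K).trans (OrderIso.setCongr _ _ Icc_top.symm))

theorem DevLE.quotient {α : Ordinal.{u}} (h : DevLE α (Submodule Rᵐᵒᵖ M))
    (K : Submodule Rᵐᵒᵖ M) : DevLE α (Submodule Rᵐᵒᵖ (M ⧸ K)) :=
  h.of_orderEmbedding ((Submodule.comapMkQRelIso K).toOrderEmbedding.trans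
    (OrderEmbedding.subtype _))

theorem rKdim_quotient_le_of_le {α : Ordinal.{u}} {I J : Submodule Rᵐᵒᵖ M}
    (hI : DevLE α (Submodule Rᵐᵒᵖ (M ⧸ I))) (h : I ≤ J) :
    rKdim R (M ⧸ J) ≤ rKdim R (M ⧸ I) := by
  refine rKdim_le_of_devLE ((devLE_quotient_iff J).mpr ?_)
  exact ((devLE_quotient_iff I).mp (devLE_rKdim hI)).Icc_subset h le_rfl

theorem rKdim_quotient_inf_le {α β : Ordinal.{u}} {I J : Submodule Rᵐᵒᵖ M}
    (hI : DevLE α (Submodule Rᵐᵒᵖ (M ⧸ I))) (hJ : DevLE β (Submodule Rᵐᵒᵖ (M ⧸ J))) :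
    rKdim R (M ⧸ (I ⊓ J)) ≤ max (rKdim R (M ⧸ I)) (rKdim R (M ⧸ J)) :=
  rKdim_le_of_devLE <| (devLE_quotient_iff _).mpr <|
    ((devLE_quotient_iff I).mp (devLE_rKdim hI)).Icc_inf_top
      ((devLE_quotient_iff J).mp (devLE_rKdim hJ))

theorem rKdim_quotient_comap_le {α : Ordinal.{u}} (f : M →ₗ[Rᵐᵒᵖ] N) {I : Submodule Rᵐᵒᵖ N}
    (hI : DevLE α (Submodule Rᵐᵒᵖ (N ⧸ I))) :
    rKdim R (M ⧸ I.comap f) ≤ rKdim R (N ⧸ I) := by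
  have hinj : Function.Injective ((I.comap f).mapQ I f le_rfl) := by
    rw [← LinearMap.ker_eq_bot, Submodule.ker_mapQ, Submodule.mkQ_map_self]
  exact rKdim_le_of_devLE <| (devLE_rKdim hI).of_orderEmbedding <|
    OrderEmbedding.ofMapLEIff (Submodule.map _)
      (fun _ _ => Submodule.map_le_map_iff_of_injective hinj _ _)

end KrullDimension

section GabrielFilter

variable {R : Type u} [Ring R]

theorem preIdeal_eq_comap (x : R) (I : RightIdeal R) :
    preIdeal x I = I.comap (LinearMap.mulLeft Rᵐᵒᵖ x) :=
  rfl

theorem isGabrielFilter_setOf_rKdim_quotient_lt {ν : Ordinal.{u}}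
    (hR : DevLE ν (Submodule Rᵐᵒᵖ R)) (α : Ordinal.{u}) :
    IsGabrielFilter {I : RightIdeal R | rKdim R (R ⧸ I) < α} := by
  refine ⟨fun I hI J hIJ => ?_, fun I hI J hJ => ?_, fun I hI x => ?_⟩
  · exact (rKdim_quotient_le_of_le (hR.quotient I) hIJ).trans_lt hI
  · exact (rKdim_quotient_inf_le (hR.quotient I) (hR.quotient J)).trans_lt (max_lt hI hJ)
  · show rKdim R (R ⧸ preIdeal x I) < α
    rw [preIdeal_eq_comap]
    exact (rKdim_quotient_comap_le _ (hR.quotient I)).trans_lt hI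

theorem rightOre_of_isGabrielFilter {V : Set R}
    (hV : IsGabrielFilter {I : RightIdeal R | ((I : Set R) ∩ V).Nonempty}) : RightOre V := by
  intro r s hs
  have hsR : ((Submodule.span Rᵐᵒᵖ {s} : Set R) ∩ V).Nonempty :=
    ⟨s, Submodule.mem_span_singleton_self s, hs⟩
  obtain ⟨s', hrs' : r * s' ∈ Submodule.span Rᵐᵒᵖ {s}, hs'⟩ := hV.2.2 _ hsR r
  obtain ⟨t, ht⟩ := Submodule.mem_span_singleton.mp hrs'
  exact ⟨unop t, s', hs', by rw [← ht, smul_eq_mul_unop]⟩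

end GabrielFilter

theorem stmt_15_general {R : Type u} [Ring R]
    (n : ℕ) (hn : rKdim R R = (n : Ordinal)) (m : ℕ) (hm : m ≤ n)
    (V : Set R)
    (hkg : {I : RightIdeal R | ((I : Set R) ∩ V).Nonempty} =
      {I : RightIdeal R | rKdim R (R ⧸ I) < (m : Ordinal)}) :
    IsGabrielFilter {I : RightIdeal R | ((I : Set R) ∩ V).Nonempty} ∧
      RightOre V := by
  have hk : IsGabrielFilter {I : RightIdeal R | ((I : Set R) ∩ V).Nonempty} := by
    rw [hkg]
    rcases Nat.eq_zero_or_pos m with rfl | hm_pos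
    · simp [IsGabrielFilter]
    · have hR : rKdim R R ≠ 0 := by rw [hn]; exact_mod_cast (by omega : n ≠ 0)
      exact isGabrielFilter_setOf_rKdim_quotient_lt (devLE_rKdim_of_ne_zero hR) _
  exact ⟨hk, rightOre_of_isGabrielFilter hk⟩

/-- If `k = g`, then `k` is a Gabriel filter and hence `V` is a right Ore
set. -/
theorem stmt_15 {R : Type u} [Ring R] (hpr : IsPrimeRing R)
    [IsNoetherianRing R] [IsNoetherian Rᵐᵒᵖ R]
    (n : ℕ) (hn : rKdim R R = (n : Ordinal)) (m : ℕ) (hm : m ≤ n)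
    (X : Set (RightIdeal R))
    (hX : ∀ p ∈ X, IsPrimeIdeal p ∧ rKdim R (R ⧸ p) = (m : Ordinal))
    (V : Set R) (hV : V = {v : R | ∀ p ∈ X, v ∈ CMod p})
    (hkg : {I : RightIdeal R | ((I : Set R) ∩ V).Nonempty} =
      {I : RightIdeal R | rKdim R (R ⧸ I) < (m : Ordinal)}) :
    IsGabrielFilter {I : RightIdeal R | ((I : Set R) ∩ V).Nonempty} ∧
      RightOre V :=
  stmt_15_general n hn m hm V hkg
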